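/- Let m ≥ 3 be an integer. For any integer k, the sum of C_m(a) over integers a with k·m + 1 ≤ a ≤ (k+1)·m − 1 and gcd(a, m) = 1 is congruent modulo m to the sum of C_m(a) over integers a with 1 ≤ a ≤ m − 1 and gcd(a, m) = 1. -/

import Mathlib

/-- The Carmichael function `λ(m)`: the smallest positive integer `n` such that
`a ^ n ≡ 1 (mod m)` for every integer `a` coprime to `m`. -/
noncomputable def carmichael (m : ℕ) : ℕ :=
  sInf {n : ℕ | 0 < n ∧ ∀ a : ℤ, Int.gcd a m = 1 → a ^ n ≡ 1 [ZMOD (m : ℤ)]}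

/-- The Carmichael quotient `C_m(a) = (a^{λ(m)} - 1) / m`. -/
noncomputable def carQuot (m : ℕ) (a : ℤ) : ℤ := (a ^ carmichael m - 1) / m

/-!
Write an integer coprime to `m` in the `k`-th block as `b + k m` with `1 ≤ b ≤ m - 1`. Expanding
`(b + k m)^λ` to first order in `m` gives `C_m(b + k m) ≡ C_m(b) + k λ b^(λ-1) (mod m)`, so the two
sums differ by `k λ ∑ b^(λ-1)`. Since `(-1)^λ ≡ 1` and `m ≥ 3`, `λ` is even, so `b ↦ b^(λ-1)` is
odd modulo `m`; the involution `b ↦ m - b` of the reduced residues has no fixed point (`m = 2b`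
would force `b = 1`), hence that sum vanishes modulo `m`.
-/

open Finset

theorem Int.ModEq.pow_totient {a : ℤ} {m : ℕ} (ha : Int.gcd a m = 1) :
    a ^ m.totient ≡ 1 [ZMOD m] := by
  rw [← ZMod.intCast_eq_intCast_iff]
  have hu := ZMod.pow_totient (ZMod.unitOfIsCoprime a (Int.isCoprime_iff_gcd_eq_one.mpr ha))
  rw [← Units.val_inj, Units.val_pow_eq_pow_val, ZMod.coe_unitOfIsCoprime, Units.val_one] at hu
  exact_mod_cast hu

section Carmichael

variable {m : ℕ}

theorem carmichael_mem (hm : m ≠ 0) :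
    carmichael m ∈ {n : ℕ | 0 < n ∧ ∀ a : ℤ, Int.gcd a m = 1 → a ^ n ≡ 1 [ZMOD (m : ℤ)]} :=
  Nat.sInf_mem ⟨m.totient, Nat.totient_pos.mpr (Nat.pos_of_ne_zero hm),
    fun _ ha => Int.ModEq.pow_totient ha⟩

theorem carmichael_pos (hm : m ≠ 0) : 0 < carmichael m :=
  (carmichael_mem hm).1

theorem pow_carmichael_modEq_one (hm : m ≠ 0) {a : ℤ} (ha : Int.gcd a m = 1) :
    a ^ carmichael m ≡ 1 [ZMOD m] :=
  (carmichael_mem hm).2 a ha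

theorem carmichael_even (hm : 3 ≤ m) : Even (carmichael m) := by
  by_contra hodd
  have h := pow_carmichael_modEq_one (show m ≠ 0 by omega) (a := -1) (by simp)
  rw [(Nat.not_even_iff_odd.mp hodd).neg_one_pow] at h
  have : (m : ℤ) ∣ 2 := by simpa using h.dvd
  have := Int.le_of_dvd two_pos this
  omega

end Carmichael

theorem Int.add_mul_pow_sub_one_ediv_modEq {m b : ℤ} (hm : m ≠ 0) (k : ℤ) {n : ℕ}
    (hdvd : m ∣ b ^ n - 1) :
    ((b + k * m) ^ n - 1) / m ≡ (b ^ n - 1) / m + k * n * b ^ (n - 1) [ZMOD m] := by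
  obtain ⟨q, hq⟩ := hdvd
  obtain ⟨t, ht⟩ := sq_dvd_add_pow_sub_sub (k * m) b n
  have hexpand : (b + k * m) ^ n - 1 = m * (q + k * n * b ^ (n - 1) + m * (k ^ 2 * t)) := by
    linear_combination ht + hq
  rw [hexpand, hq, Int.mul_ediv_cancel_left _ hm, Int.mul_ediv_cancel_left _ hm]
  exact Int.modEq_iff_dvd.mpr ⟨-(k ^ 2 * t), by ring⟩

theorem carQuot_add_mul_modEq {m : ℕ} (hm : m ≠ 0) {b : ℤ} (hb : Int.gcd b m = 1) (k : ℤ) :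
    carQuot m (b + k * m) ≡ carQuot m b + k * carmichael m * b ^ (carmichael m - 1) [ZMOD m] :=
  Int.add_mul_pow_sub_one_ediv_modEq (Int.natCast_ne_zero.mpr hm) k
    (pow_carmichael_modEq_one hm hb).symm.dvd

noncomputable def reducedResidues (m : ℕ) : Finset ℤ :=
  (Icc 1 ((m : ℤ) - 1)).filter (fun a => Int.gcd a m = 1)

section ReducedResidues

variable {m : ℕ} {b : ℤ}

theorem mem_reducedResidues :
    b ∈ reducedResidues m ↔ (1 ≤ b ∧ b ≤ m - 1) ∧ Int.gcd b m = 1 := by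
  simp [reducedResidues]

theorem sub_mem_reducedResidues (hb : b ∈ reducedResidues m) : m - b ∈ reducedResidues m := by
  rw [mem_reducedResidues] at hb ⊢
  obtain ⟨⟨hb1, hb2⟩, hbm⟩ := hb
  exact ⟨⟨by omega, by omega⟩, by rw [Int.gcd_self_sub_left, hbm]⟩

theorem sub_ne_of_mem_reducedResidues (hm : 3 ≤ m) (hb : b ∈ reducedResidues m) :
    m - b ≠ b := by
  rw [mem_reducedResidues] at hb
  obtain ⟨⟨hb1, -⟩, hbm⟩ := hb
  intro hfix
  have hb_dvd : b ∣ m := ⟨2, by linarith⟩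
  have : b ∣ 1 := by simpa [hbm] using Int.dvd_coe_gcd (dvd_refl b) hb_dvd
  have := Int.le_of_dvd one_pos this
  omega

theorem filter_coprime_Icc_eq_map_reducedResidues (m : ℕ) (k : ℤ) :
    (Icc (k * m + 1) ((k + 1) * m - 1)).filter (fun a => Int.gcd a m = 1) =
      (reducedResidues m).map (addRightEmbedding (k * m)) := by
  have hIcc : Icc (k * m + 1) ((k + 1) * m - 1) =
      (Icc 1 ((m : ℤ) - 1)).map (addRightEmbedding (k * m)) := by
    rw [map_add_right_Icc]
    congr 1 <;> ring
  rw [hIcc, filter_map, reducedResidues]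
  congr 2
  ext b
  simp

theorem sum_reducedResidues_pow_modEq_zero (hm : 3 ≤ m) {j : ℕ} (hj : Odd j) :
    ∑ b ∈ reducedResidues m, b ^ j ≡ 0 [ZMOD m] := by
  rw [← ZMod.intCast_eq_intCast_iff]
  push_cast
  refine sum_involution (fun b _ => m - b) (fun b _ => ?_)
    (fun b hb _ => sub_ne_of_mem_reducedResidues hm hb)
    (fun b hb => sub_mem_reducedResidues hb) (fun b _ => sub_sub_cancel _ _)
  push_cast
  rw [ZMod.natCast_self, zero_sub, hj.neg_pow, add_neg_cancel]

end ReducedResidues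

theorem stmt4 (m : ℕ) (hm : 3 ≤ m) (k : ℤ) :
    ∑ a ∈ (Finset.Icc (k * m + 1) ((k + 1) * m - 1)).filter (fun a => Int.gcd a m = 1),
        carQuot m a ≡
      ∑ a ∈ (Finset.Icc 1 ((m : ℤ) - 1)).filter (fun a => Int.gcd a m = 1),
        carQuot m a [ZMOD (m : ℤ)] := by
  have hm0 : m ≠ 0 := by omega
  have hodd : Odd (carmichael m - 1) :=
    Nat.Even.sub_odd (carmichael_pos hm0) (carmichael_even hm) odd_one
  rw [filter_coprime_Icc_eq_map_reducedResidues, sum_map]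
  calc ∑ b ∈ reducedResidues m, carQuot m (b + k * m)
      ≡ ∑ b ∈ reducedResidues m, (carQuot m b + k * carmichael m * b ^ (carmichael m - 1))
          [ZMOD m] :=
        Int.ModEq.sum fun b hb => carQuot_add_mul_modEq hm0 (mem_reducedResidues.mp hb).2 k
    _ = ∑ b ∈ reducedResidues m, carQuot m b +
          k * carmichael m * ∑ b ∈ reducedResidues m, b ^ (carmichael m - 1) := by
        rw [sum_add_distrib, mul_sum]
    _ ≡ ∑ b ∈ reducedResidues m, carQuot m b + k * carmichael m * 0 [ZMOD m] :=
        ((sum_reducedResidues_pow_modEq_zero hm hodd).mul_left _).add_left _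
    _ = ∑ b ∈ reducedResidues m, carQuot m b := by rw [mul_zero, add_zero]
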